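/- Let q ≥ 1 be an integer and l an integer, and define G : ℂ → ℂ by G(s) := Σ_{(a,b)} e(a·l/q) · expZeta(b/q, s), the sum running over all pairs (a,b) with 1 ≤ a,b ≤ q and a·b ≡ 1 (mod q), where b/q is taken in ℝ/ℤ. Then: (i) for every s ∈ ℂ with Re s > 1, the series Σ_{n=1}^∞ Kl(l,n;q)/n^{s} converges absolutely and equals G(s); (ii) G is complex differentiable at every point s ≠ 1. -/

import Mathlib

open Complex

/-- `e(z) = exp(2πiz)`. -/
noncomputable def eC (z : ℂ) : ℂ := Complex.exp (2 * Real.pi * Complex.I * z)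

/-- The Kloosterman sum `Kl(m,n;c) = Σ_{x mod c, (x,c)=1} e((mx + nx*)/c)`,
where `x*` is the inverse of `x` modulo `c`. -/
noncomputable def Kl (m n : ℤ) (c : ℕ) : ℂ :=
  ∑ x ∈ Finset.filter (fun x => Nat.gcd x c = 1) (Finset.Icc 1 c),
    eC ((((m * x + n * ((((x : ZMod c))⁻¹.val : ℕ) : ℤ) : ℤ) : ℝ) / c : ℝ))

/-- `G(s) = Σ_{1 ≤ a,b ≤ q, ab ≡ 1 (q)} e(al/q) expZeta(b/q, s)`. -/
noncomputable def G (q : ℕ) (l : ℤ) (s : ℂ) : ℂ :=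
  ∑ a ∈ Finset.Icc 1 q, ∑ b ∈ Finset.Icc 1 q,
    if (a * b) % q = 1 % q then
      eC ((((a : ℤ) * l : ℤ) : ℝ) / q) *
        HurwitzZeta.expZeta (((b : ℝ) / q : ℝ) : UnitAddCircle) s
    else 0


/-! Expanding the Kloosterman sum over the units of `ZMod q` gives
`Kl(l,n;q) = Σ_x e(lx/q) e(n x⁻¹/q)`, so for `Re s > 1` its Dirichlet series is the finite
combination `Σ_x e(lx/q) Σ_n e(n x⁻¹/q) n^{-s} = Σ_x e(lx/q) expZeta(x⁻¹/q, s)`, which is `G(s)`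
once the congruence `ab ≡ 1` is solved for `b`. In `ℂ` unconditional convergence is absolute
convergence, and `G`, a finite combination of `expZeta`s, is differentiable away from `s = 1`. -/

open ZMod HurwitzZeta

local notation "𝕖" => ZMod.stdAddChar

namespace ZMod

variable {q : ℕ} [NeZero q] {M : Type*} [AddCommMonoid M]

lemma sum_Icc_one_natCast (F : ZMod q → M) :
    ∑ b ∈ Finset.Icc 1 q, F b = ∑ b : ZMod q, F b := by
  refine Finset.sum_nbij (fun b => (b : ZMod q)) (by simp) ?_ ?_ fun _ _ => rfl
  · intro a ha b hb hab
    simp only [Finset.coe_Icc, Set.mem_Icc] at ha hb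
    refine ((natCast_eq_natCast_iff _ _ _).mp hab).eq_of_abs_lt ?_
    rw [abs_sub_lt_iff]
    omega
  · intro x _
    have := (x - 1).val_lt
    refine ⟨(x - 1).val + 1, by simp only [Finset.coe_Icc, Set.mem_Icc]; omega, ?_⟩
    simp

lemma sum_ite_mul_eq_one (a : ZMod q) (g : ZMod q → M) :
    ∑ b, (if a * b = 1 then g b else 0) = if IsUnit a then g a⁻¹ else 0 := by
  by_cases ha : IsUnit a
  · have hb (b : ZMod q) : a * b = 1 ↔ a⁻¹ = b :=
      ⟨fun h => by rw [← one_mul b, ← inv_mul_of_unit a ha, mul_assoc, h, mul_one],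
        fun h => h ▸ mul_inv_of_unit a ha⟩
    simp only [hb, Finset.sum_ite_eq, Finset.mem_univ, if_true, ha]
  · rw [if_neg ha]
    exact Finset.sum_eq_zero fun b _ => if_neg fun h => ha (.of_mul_eq_one b h)

end ZMod

section

variable {q : ℕ} [NeZero q]

lemma eC_intCast_div (k : ℤ) : eC ((k : ℝ) / q) = 𝕖 (k : ZMod q) := by
  rw [eC, stdAddChar_coe]
  push_cast
  ring_nf

lemma Kl_eq_sum_isUnit (m n : ℤ) :
    Kl m n q = ∑ x : ZMod q with IsUnit x, 𝕖 ((m : ZMod q) * x + (n : ZMod q) * x⁻¹) := by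
  rw [Kl, Finset.sum_filter, Finset.sum_filter, ← sum_Icc_one_natCast]
  refine Finset.sum_congr rfl fun x _ => if_congr (isUnit_iff_coprime x q).symm ?_ rfl
  rw [ofReal_div, ofReal_natCast, eC_intCast_div]
  push_cast
  rw [natCast_zmod_val]

lemma G_eq_sum_isUnit (l : ℤ) (s : ℂ) :
    G q l s = ∑ x : ZMod q with IsUnit x, 𝕖 ((l : ZMod q) * x) * expZeta (toAddCircle x⁻¹) s := by
  set F : ZMod q → ZMod q → ℂ := fun a b =>
    if a * b = 1 then 𝕖 ((l : ZMod q) * a) * expZeta (toAddCircle b) s else 0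
  have hsummand (a b : ℕ) : (if (a * b) % q = 1 % q then
      eC ((((a : ℤ) * l : ℤ) : ℝ) / q) * expZeta (((b : ℝ) / q : ℝ) : UnitAddCircle) s else 0) =
      F a b := by
    refine if_congr ?_ ?_ rfl
    · rw [← natCast_eq_natCast_iff', Nat.cast_mul, Nat.cast_one]
    · rw [← toAddCircle_natCast, eC_intCast_div]
      push_cast
      ring_nf
  simp only [G, hsummand, Finset.sum_filter]
  rw [← sum_Icc_one_natCast]
  exact Finset.sum_congr rfl fun a _ =>
    (sum_Icc_one_natCast (F a)).trans (sum_ite_mul_eq_one _ _)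

lemma hasSum_stdAddChar_div_cpow (j : ZMod q) {s : ℂ} (hs : 1 < s.re) :
    HasSum (fun n : ℕ => 𝕖 (j * ((n + 1 : ℕ) : ZMod q)) / ((n + 1 : ℕ) : ℂ) ^ s)
      (expZeta (toAddCircle j) s) := by
  set f : ℕ → ℂ := fun n => 𝕖 (j * (n : ZMod q)) / (n : ℂ) ^ s
  have hf : HasSum f (expZeta (toAddCircle j) s) := by
    rw [toAddCircle_apply]
    refine (hasSum_expZeta_of_one_lt_re (j.val / q : ℝ) hs).congr_fun fun n => ?_
    have hj : j * (n : ZMod q) = ((j.val * n : ℤ) : ZMod q) := by simp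
    simp only [f]
    rw [hj, stdAddChar_coe]
    push_cast
    ring_nf
  have hf0 : f 0 = 0 := by simp [f, zero_cpow (ne_zero_of_one_lt_re hs)]
  have hshift := (hasSum_nat_add_iff' 1).mpr hf
  rwa [Finset.sum_range_one, hf0, sub_zero] at hshift

lemma hasSum_Kl_div_cpow (l : ℤ) {s : ℂ} (hs : 1 < s.re) :
    HasSum (fun n : ℕ => Kl l ((n : ℤ) + 1) q / (((n : ℕ) + 1 : ℕ) : ℂ) ^ s) (G q l s) := by
  rw [G_eq_sum_isUnit]
  refine (hasSum_sum fun x _ =>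
    (hasSum_stdAddChar_div_cpow x⁻¹ hs).mul_left (𝕖 ((l : ZMod q) * x))).congr_fun fun n => ?_
  rw [Kl_eq_sum_isUnit, Finset.sum_div]
  refine Finset.sum_congr rfl fun x _ => ?_
  rw [AddChar.map_add_eq_mul, mul_div_assoc]
  push_cast
  ring_nf

end

theorem stmt5 (q : ℕ) (hq : 1 ≤ q) (l : ℤ) :
    (∀ s : ℂ, 1 < s.re →
      Summable (fun n : ℕ => ‖Kl l ((n : ℤ) + 1) q / (((n : ℕ) + 1 : ℕ) : ℂ) ^ s‖) ∧
      ∑' n : ℕ, Kl l ((n : ℤ) + 1) q / (((n : ℕ) + 1 : ℕ) : ℂ) ^ s = G q l s) ∧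
    (∀ s : ℂ, s ≠ 1 → DifferentiableAt ℂ (G q l) s) := by
  have : NeZero q := ⟨by omega⟩
  refine ⟨fun s hs => ⟨summable_norm_iff.mpr (hasSum_Kl_div_cpow l hs).summable,
    (hasSum_Kl_div_cpow l hs).tsum_eq⟩, fun s hs => ?_⟩
  rw [funext (G_eq_sum_isUnit l)]
  exact .fun_sum fun x _ => (differentiableAt_expZeta _ s (.inl hs)).const_mul _
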